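/- Let R be a semiprime ring with finitely many minimal primes. Then the following statements are equivalent: (1) every regular element of the centre Z(R) is a regular element of R, i.e. C_{Z(R)} ⊆ C_R; (2) C_{Z(R)} ∩ 𝔭 = ∅ for all 𝔭 ∈ min(R); (3) the map ρ_{R,min} : min(R) → min(Z(R)), 𝔭 ↦ 𝔭 ∩ Z(R), is a well-defined map (i.e. 𝔭 ∩ Z(R) is a minimal prime of Z(R) for every 𝔭 ∈ min(R)). -/

import Mathlib

/- Common framework: two-sided ideals, prime ideals, denominator sets and
   left localizations of (possibly noncommutative) rings, described
   axiomatically via their characteristic properties. -/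

namespace BavulaMinPrimes

/-- A subset of a ring is a two-sided ideal. -/
def IsIdealSet {R : Type*} [Ring R] (I : Set R) : Prop :=
  (0 : R) ∈ I ∧ (∀ a ∈ I, ∀ b ∈ I, a + b ∈ I) ∧ (∀ a ∈ I, -a ∈ I) ∧
    ∀ a ∈ I, ∀ r : R, r * a ∈ I ∧ a * r ∈ I

/-- A (two-sided) prime ideal: a proper ideal `P` such that `A * B ⊆ P`
implies `A ⊆ P` or `B ⊆ P` for all ideals `A`, `B`. -/
def IsPrimeIdealSet {R : Type*} [Ring R] (P : Set R) : Prop :=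
  IsIdealSet P ∧ P ≠ Set.univ ∧
    ∀ A B : Set R, IsIdealSet A → IsIdealSet B →
      (∀ a ∈ A, ∀ b ∈ B, a * b ∈ P) → A ⊆ P ∨ B ⊆ P

/-- A completely prime ideal: the factor ring is a domain. -/
def IsCompletelyPrimeIdealSet {R : Type*} [Ring R] (P : Set R) : Prop :=
  IsIdealSet P ∧ P ≠ Set.univ ∧ ∀ a b : R, a * b ∈ P → a ∈ P ∨ b ∈ P

/-- A minimal prime ideal of a ring. -/
def IsMinimalPrimeIdealSet {R : Type*} [Ring R] (P : Set R) : Prop :=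
  IsPrimeIdealSet P ∧ ∀ P' : Set R, IsPrimeIdealSet P' → P' ⊆ P → P' = P

/-- A prime minimal over an ideal `A`. -/
def IsMinimalPrimeOver {R : Type*} [Ring R] (A P : Set R) : Prop :=
  IsPrimeIdealSet P ∧ A ⊆ P ∧
    ∀ P' : Set R, IsPrimeIdealSet P' → A ⊆ P' → P' ⊆ P → P' = P

/-- The set `min(R)` of minimal primes of `R`. -/
def minPrimes (R : Type*) [Ring R] : Set (Set R) := { P | IsMinimalPrimeIdealSet P }

/-- The prime radical: intersection of all prime ideals. -/
def primeRadicalSet (R : Type*) [Ring R] : Set R :=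
  { r : R | ∀ P : Set R, IsPrimeIdealSet P → r ∈ P }

/-- A ring is semiprime if its prime radical is zero. -/
def IsSemiprimeRing (R : Type*) [Ring R] : Prop := primeRadicalSet R = {0}

/-- A ring is prime if its zero ideal is a prime ideal. -/
def IsPrimeRing (R : Type*) [Ring R] : Prop := IsPrimeIdealSet ({0} : Set R)

/-- A multiplicative subset: `1 ∈ S`, `0 ∉ S`, closed under multiplication. -/
def IsMulSet {R : Type*} [Ring R] (S : Set R) : Prop :=
  (1 : R) ∈ S ∧ (0 : R) ∉ S ∧ ∀ s ∈ S, ∀ t ∈ S, s * t ∈ S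

/-- The left Ore condition: `S r ∩ R s ≠ ∅`. -/
def LeftOre {R : Type*} [Ring R] (S : Set R) : Prop :=
  ∀ r : R, ∀ s ∈ S, ∃ s' ∈ S, ∃ r' : R, s' * r = r' * s

/-- The right Ore condition: `r S ∩ s R ≠ ∅`. -/
def RightOre {R : Type*} [Ring R] (S : Set R) : Prop :=
  ∀ r : R, ∀ s ∈ S, ∃ s' ∈ S, ∃ r' : R, r * s' = s * r'

/-- A left denominator set: a left Ore multiplicative set such that
`r s = 0` (with `s ∈ S`) implies `t r = 0` for some `t ∈ S`. -/
def IsLeftDenominatorSet {R : Type*} [Ring R] (S : Set R) : Prop :=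
  IsMulSet S ∧ LeftOre S ∧ ∀ r : R, ∀ s ∈ S, r * s = 0 → ∃ t ∈ S, t * r = 0

/-- A right denominator set. -/
def IsRightDenominatorSet {R : Type*} [Ring R] (S : Set R) : Prop :=
  IsMulSet S ∧ RightOre S ∧ ∀ r : R, ∀ s ∈ S, s * r = 0 → ∃ t ∈ S, r * t = 0

/-- `ass_l(S) = { r | s r = 0 for some s ∈ S }`. -/
def lAss {R : Type*} [Ring R] (S : Set R) : Set R := { r : R | ∃ s ∈ S, s * r = 0 }

/-- `f : R →+* Q` realizes `Q` as the left localization `S⁻¹R`: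
elements of `S` become units, every element of `Q` is a left fraction
`(f s)⁻¹ (f r)`, and the kernel of `f` is `ass_l(S)`.  These properties
characterize `S⁻¹R` up to a unique `R`-isomorphism. -/
structure IsLeftLocalization {R Q : Type*} [Ring R] [Ring Q]
    (S : Set R) (f : R →+* Q) : Prop where
  isUnit : ∀ s ∈ S, IsUnit (f s)
  surj : ∀ q : Q, ∃ s ∈ S, ∃ r : R, f s * q = f r
  ker : ∀ r : R, f r = 0 ↔ r ∈ lAss S

/-- `S⁻¹I = { s⁻¹ a | s ∈ S, a ∈ I }` as a subset of the localization `Q`: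
`q ∈ S⁻¹I` iff `f s * q = f a` for some `s ∈ S`, `a ∈ I`. -/
def locSet {R Q : Type*} [Ring R] [Ring Q] (f : R →+* Q) (S : Set R)
    (I : Set R) : Set Q :=
  { q : Q | ∃ s ∈ S, ∃ a ∈ I, f s * q = f a }

/-- A normal element: `R n = n R`. -/
def IsNormalElement {R : Type*} [Ring R] (n : R) : Prop :=
  (∀ r : R, ∃ r' : R, r * n = n * r') ∧ ∀ r : R, ∃ r' : R, n * r = r' * n

/-- A prime rich ring: every ideal contains a finite product of prime ideals
containing it (the empty product being the whole ring). -/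
def IsPrimeRich (R : Type*) [Ring R] : Prop :=
  ∀ A : Set R, IsIdealSet A →
    ∃ (n : ℕ) (P : Fin n → Set R),
      (∀ i, IsPrimeIdealSet (P i) ∧ A ⊆ P i) ∧
      ∀ x : Fin n → R, (∀ i, x i ∈ P i) → (List.ofFn x).prod ∈ A

/-- An ideal which is finitely generated as a right `R`-module. -/
def IsFGRightIdeal {R : Type*} [Ring R] (I : Set R) : Prop :=
  ∃ (m : ℕ) (g : Fin m → R), (∀ i, g i ∈ I) ∧
    ∀ x ∈ I, ∃ c : Fin m → R, x = ∑ i, g i * c i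

/-!
The minimal primes of a semiprime ring with finitely many of them consist of zero divisors: an
element `x` of the minimal prime `𝔭` kills any `b ∈ ⋂_{𝔮 ≠ 𝔭} 𝔮 \ 𝔭`, since `x b` lies in every
minimal prime. Conversely a central element outside all minimal primes is regular, because its
annihilators lie in every minimal prime. This gives (1) ⇔ (2).

For (2) ⇔ (3) everything takes place in the commutative ring `Z(R)`, where the traces
`𝔭 ∩ Z(R)` of the minimal primes of `R` are finitely many primes with zero intersection. Hence
`Z(R)` is reduced with finitely many minimal primes, so its zero divisors are covered by its
minimal primes, and prime avoidance shows that a prime consisting of zero divisors is minimal.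
The converse, that minimal primes consist of zero divisors, holds in any commutative ring.
-/

section IdealSet

variable {R : Type*} [Ring R] {P : Set R}

lemma IsPrimeIdealSet.one_notMem (hP : IsPrimeIdealSet P) : (1 : R) ∉ P := fun h1 =>
  hP.2.1 (Set.eq_univ_of_forall fun r => by simpa using (hP.1.2.2.2 1 h1 r).1)

lemma isIdealSet_sInter {S : Set (Set R)} (h : ∀ I ∈ S, IsIdealSet I) : IsIdealSet (⋂₀ S) :=
  ⟨fun I hI => (h I hI).1, fun a ha b hb I hI => (h I hI).2.1 a (ha I hI) b (hb I hI),
    fun a ha I hI => (h I hI).2.2.1 a (ha I hI),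
    fun a ha r => ⟨fun I hI => ((h I hI).2.2.2 a (ha I hI) r).1,
      fun I hI => ((h I hI).2.2.2 a (ha I hI) r).2⟩⟩

/-- Apply primality to the ideals `z R` and `{y | z y ∈ P}`, whose product lies in `P`. -/
lemma IsPrimeIdealSet.mem_of_central_mul_mem (hP : IsPrimeIdealSet P) {z : R}
    (hz : z ∈ Subring.center R) (hzP : z ∉ P) {x : R} (hx : z * x ∈ P) : x ∈ P := by
  have hcomm : ∀ g : R, g * z = z * g := Subring.mem_center_iff.mp hz
  have hzR : IsIdealSet (Set.range (z * ·)) := by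
    refine ⟨⟨0, mul_zero z⟩, ?_, ?_, ?_⟩
    · rintro _ ⟨a, rfl⟩ _ ⟨b, rfl⟩
      exact ⟨a + b, mul_add z a b⟩
    · rintro _ ⟨a, rfl⟩
      exact ⟨-a, mul_neg z a⟩
    · rintro _ ⟨a, rfl⟩ r
      exact ⟨⟨r * a, by simp only [← mul_assoc, hcomm]⟩, ⟨a * r, (mul_assoc z a r).symm⟩⟩
  have hann : IsIdealSet {y : R | z * y ∈ P} := by
    refine ⟨by simpa using hP.1.1, fun a ha b hb => ?_, fun a ha => ?_, fun a ha r => ⟨?_, ?_⟩⟩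
    · simpa only [Set.mem_ofPred_eq, mul_add] using hP.1.2.1 _ ha _ hb
    · simpa only [Set.mem_ofPred_eq, mul_neg] using hP.1.2.2.1 _ ha
    · simpa only [Set.mem_ofPred_eq, ← mul_assoc, hcomm r] using (hP.1.2.2.2 _ ha r).1
    · simpa only [Set.mem_ofPred_eq, ← mul_assoc] using (hP.1.2.2.2 _ ha r).2
  have hprod : ∀ y ∈ Set.range (z * ·), ∀ b ∈ {y : R | z * y ∈ P}, y * b ∈ P := by
    rintro _ ⟨a, rfl⟩ b hb
    simpa only [← mul_assoc, hcomm a] using (hP.1.2.2.2 _ hb a).1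
  rcases hP.2.2 _ _ hzR hann hprod with h | h
  · exact absurd (h ⟨1, mul_one z⟩) hzP
  · exact h hx

lemma IsPrimeIdealSet.exists_subset_of_sInter_subset (hP : IsPrimeIdealSet P)
    {S : Set (Set R)} (hS : S.Finite) (hid : ∀ I ∈ S, IsIdealSet I) (h : ⋂₀ S ⊆ P) :
    ∃ I ∈ S, I ⊆ P := by
  induction S, hS using Set.Finite.induction_on with
  | empty => exact absurd (Set.univ_subset_iff.mp (by simpa using h)) hP.2.1
  | @insert I S _ _ ih =>
    rw [Set.sInter_insert] at h
    have hI := hid I (Set.mem_insert I S)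
    have hS : ∀ J ∈ S, IsIdealSet J := fun J hJ => hid J (Set.mem_insert_of_mem I hJ)
    have hinter := isIdealSet_sInter hS
    rcases hP.2.2 I (⋂₀ S) hI hinter fun a ha b hb =>
        h ⟨(hI.2.2.2 a ha b).2, (hinter.2.2.2 b hb a).1⟩ with hIP | hSP
    · exact ⟨I, Set.mem_insert I S, hIP⟩
    · obtain ⟨J, hJ, hJP⟩ := ih hS hSP
      exact ⟨J, Set.mem_insert_of_mem I hJ, hJP⟩

lemma isPrimeIdealSet_sInter_of_isChain {c : Set (Set R)} (hc : IsChain (· ⊆ ·) c)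
    (hne : c.Nonempty) (hprime : ∀ Q ∈ c, IsPrimeIdealSet Q) : IsPrimeIdealSet (⋂₀ c) := by
  refine ⟨isIdealSet_sInter fun Q hQ => (hprime Q hQ).1, fun huniv => ?_,
    fun A B hA hB hAB => or_iff_not_imp_left.mpr fun hAc => ?_⟩
  · obtain ⟨Q, hQ⟩ := hne
    exact (hprime Q hQ).one_notMem ((huniv ▸ Set.mem_univ 1 : (1 : R) ∈ ⋂₀ c) Q hQ)
  · obtain ⟨a, haA, hac⟩ := Set.not_subset.mp hAc
    obtain ⟨Q₁, hQ₁, haQ₁⟩ : ∃ Q₁ ∈ c, a ∉ Q₁ := by simpa using hac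
    have hB : ∀ Q ∈ c, a ∉ Q → B ⊆ Q := fun Q hQ haQ =>
      ((hprime Q hQ).2.2 A B hA hB fun x hx y hy => hAB x hx y hy Q hQ).resolve_left
        fun h => haQ (h haA)
    intro b hb Q hQ
    rcases hc.total hQ hQ₁ with hsub | hsub
    · exact hB Q hQ (fun h => haQ₁ (hsub h)) hb
    · exact hsub (hB Q₁ hQ₁ haQ₁ hb)

lemma IsPrimeIdealSet.exists_minimal_subset (hP : IsPrimeIdealSet P) :
    ∃ p, IsMinimalPrimeIdealSet p ∧ p ⊆ P := by
  obtain ⟨m, -, hm⟩ := zorn_superset_nonempty {Q | IsPrimeIdealSet Q ∧ Q ⊆ P}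
    (fun c hcS hc hne => ⟨⋂₀ c,
      ⟨isPrimeIdealSet_sInter_of_isChain hc hne fun Q hQ => (hcS hQ).1,
        (Set.sInter_subset_of_mem hne.some_mem).trans (hcS hne.some_mem).2⟩,
      fun _ => Set.sInter_subset_of_mem⟩) P ⟨hP, subset_rfl⟩
  exact ⟨m, ⟨hm.1.1, fun Q hQ hQm => hm.eq_of_le ⟨hQ, hQm.trans hm.1.2⟩ hQm⟩, hm.1.2⟩

lemma IsSemiprimeRing.eq_zero_of_forall_mem_minPrimes (hR : IsSemiprimeRing R) {x : R}
    (h : ∀ p ∈ minPrimes R, x ∈ p) : x = 0 := by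
  have hx : x ∈ primeRadicalSet R := fun P hP => by
    obtain ⟨p, hp, hpP⟩ := hP.exists_minimal_subset
    exact hpP (h p hp)
  rwa [show primeRadicalSet R = {0} from hR] at hx

lemma not_isLeftRegular_of_mem_minPrimes (hR : IsSemiprimeRing R) (hfin : (minPrimes R).Finite)
    {p : Set R} (hp : p ∈ minPrimes R) {x : R} (hx : x ∈ p) : ¬ IsLeftRegular x := by
  have hnot : ¬ ⋂₀ (minPrimes R \ {p}) ⊆ p := fun h => by
    obtain ⟨q, ⟨hq, hqp⟩, hsub⟩ := hp.1.exists_subset_of_sInter_subset (hfin.sdiff)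
      (fun q hq => hq.1.1.1) h
    exact hqp (hp.2 q hq.1 hsub)
  obtain ⟨b, hb, hbp⟩ := Set.not_subset.mp hnot
  have hxb : x * b = 0 := hR.eq_zero_of_forall_mem_minPrimes fun q hq => by
    rcases eq_or_ne q p with rfl | hqp
    · exact (hq.1.1.2.2.2 x hx b).2
    · exact (hq.1.1.2.2.2 b (hb q ⟨hq, hqp⟩) x).1
  rw [isLeftRegular_iff_right_eq_zero_of_mul]
  exact fun h => hbp (h b hxb ▸ hp.1.1.1)

lemma isRegular_of_forall_notMem_minPrimes (hR : IsSemiprimeRing R) {z : R}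
    (hz : z ∈ Subring.center R) (h : ∀ p ∈ minPrimes R, z ∉ p) : IsRegular z := by
  have hleft : IsLeftRegular z := isLeftRegular_iff_right_eq_zero_of_mul.mpr fun x hx =>
    hR.eq_zero_of_forall_mem_minPrimes fun p hp =>
      hp.1.mem_of_central_mul_mem hz (h p hp) (hx ▸ hp.1.1.1)
  exact ⟨hleft, hleft.right_of_commute fun b => (Subring.mem_center_iff.mp hz b).symm⟩

end IdealSet

section CommRing

variable {C : Type*} [CommRing C]

lemma isIdealSet_coe (I : Ideal C) : IsIdealSet (I : Set C) :=
  ⟨I.zero_mem, fun _ ha _ hb => I.add_mem ha hb, fun _ ha => I.neg_mem ha,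
    fun _ ha r => ⟨I.mul_mem_left r ha, I.mul_mem_right r ha⟩⟩

lemma IsIdealSet.exists_coe_eq {P : Set C} (hP : IsIdealSet P) : ∃ I : Ideal C, (I : Set C) = P :=
  ⟨{ carrier := P
     add_mem' := fun ha hb => hP.2.1 _ ha _ hb
     zero_mem' := hP.1
     smul_mem' := fun c x hx => (hP.2.2.2 x hx c).1 }, rfl⟩

lemma isPrimeIdealSet_coe_iff (I : Ideal C) : IsPrimeIdealSet (I : Set C) ↔ I.IsPrime := by
  refine ⟨fun hI => ⟨fun htop => hI.one_notMem (by simp [htop]), fun {a b} hab => ?_⟩,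
    fun hI => ⟨isIdealSet_coe I, fun huniv => hI.ne_top ((Ideal.eq_top_iff_one I).mpr
      (huniv ▸ Set.mem_univ 1 : (1 : C) ∈ (I : Set C))), fun A B _ _ hAB => ?_⟩⟩
  · have hprod : ∀ x ∈ (Ideal.span {a} : Set C), ∀ y ∈ (Ideal.span {b} : Set C),
        x * y ∈ (I : Set C) := by
      intro x hx y hy
      obtain ⟨c, rfl⟩ := Ideal.mem_span_singleton'.mp hx
      obtain ⟨d, rfl⟩ := Ideal.mem_span_singleton'.mp hy
      rw [mul_mul_mul_comm]
      exact I.mul_mem_left _ hab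
    exact (hI.2.2 _ _ (isIdealSet_coe _) (isIdealSet_coe _) hprod).imp
      (· (Ideal.mem_span_singleton_self a)) (· (Ideal.mem_span_singleton_self b))
  · refine or_iff_not_imp_left.mpr fun hA => ?_
    obtain ⟨a, ha, haI⟩ := Set.not_subset.mp hA
    exact fun b hb => (hI.mem_or_mem (hAB a ha b hb)).resolve_left haI

lemma isMinimalPrimeIdealSet_coe_iff (I : Ideal C) :
    IsMinimalPrimeIdealSet (I : Set C) ↔ I ∈ minimalPrimes C := by
  rw [minimalPrimes_eq_minimals, Set.mem_ofPred_eq, IsMinimalPrimeIdealSet,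
    isPrimeIdealSet_coe_iff]
  refine ⟨fun h => ⟨h.1, fun J hJ hJI => ?_⟩, fun h => ⟨h.1, fun P hP hPI => ?_⟩⟩
  · exact (h.2 J ((isPrimeIdealSet_coe_iff J).mpr hJ) hJI).superset
  · obtain ⟨J, rfl⟩ := hP.1.exists_coe_eq
    exact congrArg _ (h.eq_of_le ((isPrimeIdealSet_coe_iff J).mp hP) hPI)

variable {ι : Type*} {Q : ι → Ideal C}

lemma isReduced_of_iInf_eq_bot (hQ : ∀ i, (Q i).IsPrime) (hbot : ⨅ i, Q i = ⊥) :
    IsReduced C where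
  eq_zero x := fun ⟨n, hn⟩ => by
    have hx : x ∈ ⨅ i, Q i := (Submodule.mem_iInf Q).mpr fun i =>
      (hQ i).mem_of_pow_mem n (hn ▸ (Q i).zero_mem)
    rwa [hbot, Ideal.mem_bot] at hx

lemma minimalPrimes_subset_range_of_iInf_eq_bot [Finite ι] (hQ : ∀ i, (Q i).IsPrime)
    (hbot : ⨅ i, Q i = ⊥) : minimalPrimes C ⊆ Set.range Q := by
  have := Fintype.ofFinite ι
  intro m hm
  rw [minimalPrimes_eq_minimals] at hm
  obtain ⟨i, -, hi⟩ := (hm.1.inf_le' (s := Finset.univ) (f := Q)).mp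
    (by rw [Finset.inf_univ_eq_iInf, hbot]; exact bot_le)
  exact ⟨i, hm.eq_of_le (hQ i) hi⟩

lemma mem_minimalPrimes_of_disjoint_nonZeroDivisors [IsReduced C]
    (hfin : (minimalPrimes C).Finite) {P : Ideal C} (hP : P.IsPrime)
    (hdisj : Disjoint (P : Set C) (nonZeroDivisors C)) : P ∈ minimalPrimes C := by
  have hcover : (P : Set C) ⊆ ⋃ m ∈ minimalPrimes C, (m : Set C) := fun x hx => by
    obtain ⟨y, hxy, hy⟩ : ∃ y, x * y = 0 ∧ y ≠ 0 := by
      simpa [mem_nonZeroDivisors_iff_right, mul_comm x] using Set.disjoint_left.mp hdisj hx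
    refine Ideal.iUnion_minimalPrimes.superset ⟨y, ?_, ?_⟩ <;>
      rwa [Ideal.radical_bot_of_isReduced, Ideal.mem_bot]
  obtain ⟨m, hm, hPm⟩ := (Ideal.subset_union_prime_finite hfin ⊥ ⊥ (f := id)
    fun _ hm _ _ => IsMinimalPrime.isPrime hm).mp hcover
  rwa [← ((IsMinimalPrime.iff_minimal m).mp hm).eq_of_le hP hPm] at hm

end CommRing

section Center

variable {R : Type*} [Ring R]

/-- The trace `p ∩ Z(R)` of a two-sided ideal `p`. -/
def centerIdeal {p : Set R} (hp : IsIdealSet p) : Ideal (Subring.center R) where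
  carrier := {z | (z : R) ∈ p}
  add_mem' ha hb := hp.2.1 _ ha _ hb
  zero_mem' := hp.1
  smul_mem' c _ hz := (hp.2.2.2 _ hz c).1

lemma isPrime_centerIdeal {p : Set R} (hp : IsPrimeIdealSet p) : (centerIdeal hp.1).IsPrime where
  ne_top' h := hp.one_notMem ((Ideal.eq_top_iff_one _).mp h)
  mem_or_mem' {a _} hab := or_iff_not_imp_left.mpr fun ha => hp.mem_of_central_mul_mem a.2 ha hab

lemma iInf_centerIdeal_minPrimes_eq_bot (hR : IsSemiprimeRing R) :
    ⨅ q : minPrimes R, centerIdeal q.2.1.1 = ⊥ :=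
  eq_bot_iff.mpr fun _ hz => Ideal.mem_bot.mpr <| Subtype.ext <|
    hR.eq_zero_of_forall_mem_minPrimes fun q hq => (Submodule.mem_iInf _).mp hz ⟨q, hq⟩

lemma forall_notMem_iff_isMinimalPrimeIdealSet_center (hR : IsSemiprimeRing R)
    (hfin : (minPrimes R).Finite) {p : Set R} (hp : p ∈ minPrimes R) :
    (∀ z : Subring.center R, z ∈ nonZeroDivisors (Subring.center R) → (z : R) ∉ p) ↔
      IsMinimalPrimeIdealSet {z : Subring.center R | (z : R) ∈ p} := by
  have hQ : ∀ q : minPrimes R, (centerIdeal q.2.1.1).IsPrime := fun q => isPrime_centerIdeal q.2.1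
  have hbot := iInf_centerIdeal_minPrimes_eq_bot hR
  have : Finite (minPrimes R) := hfin.to_subtype
  have : IsReduced (Subring.center R) := isReduced_of_iInf_eq_bot hQ hbot
  change _ ↔ IsMinimalPrimeIdealSet (centerIdeal hp.1.1 : Set (Subring.center R))
  rw [isMinimalPrimeIdealSet_coe_iff]
  refine ⟨fun h => ?_, fun h z hz hzp => ?_⟩
  · exact mem_minimalPrimes_of_disjoint_nonZeroDivisors
      ((Set.finite_range _).subset (minimalPrimes_subset_range_of_iInf_eq_bot hQ hbot))
      (hQ ⟨p, hp⟩) (Set.disjoint_left.mpr fun z hzp hz => h z hz hzp)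
  · exact Set.disjoint_left.mp (Ideal.disjoint_nonZeroDivisors_of_mem_minimalPrimes h) hzp hz

end Center

/-- Let `R` be a semiprime ring with finitely many minimal
primes.  TFAE: (1) `C_{Z(R)} ⊆ C_R`; (2) `C_{Z(R)} ∩ 𝔭 = ∅` for all
`𝔭 ∈ min(R)`; (3) the map `ρ_{R,min} : min(R) → min(Z(R))`,
`𝔭 ↦ 𝔭 ∩ Z(R)`, is well defined. -/
theorem statement11 {R : Type*} [Ring R]
    (hR : IsSemiprimeRing R) (hfin : (minPrimes R).Finite) :
    ((∀ z : Subring.center R,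
        z ∈ nonZeroDivisors (Subring.center R) → IsRegular (z : R)) ↔
      ∀ p ∈ minPrimes R, ∀ z : Subring.center R,
        z ∈ nonZeroDivisors (Subring.center R) → (z : R) ∉ p) ∧
    ((∀ z : Subring.center R,
        z ∈ nonZeroDivisors (Subring.center R) → IsRegular (z : R)) ↔
      ∀ p ∈ minPrimes R,
        IsMinimalPrimeIdealSet {z : Subring.center R | (z : R) ∈ p}) := by
  have h12 : (∀ z : Subring.center R,
        z ∈ nonZeroDivisors (Subring.center R) → IsRegular (z : R)) ↔
      ∀ p ∈ minPrimes R, ∀ z : Subring.center R,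
        z ∈ nonZeroDivisors (Subring.center R) → (z : R) ∉ p :=
    ⟨fun h p hp z hz hzp => not_isLeftRegular_of_mem_minPrimes hR hfin hp hzp (h z hz).left,
      fun h z hz => isRegular_of_forall_notMem_minPrimes hR z.2 fun p hp => h p hp z hz⟩
  exact ⟨h12, h12.trans <| forall₂_congr fun p hp =>
    forall_notMem_iff_isMinimalPrimeIdealSet_center hR hfin hp⟩

end BavulaMinPrimes
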